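/- arXiv:2307.09073 — 2 statements merged into one kernel-verified Lean document; each statement's English description precedes it below -/
import Mathlib

section
/- Let (W, S) be a Coxeter system with root system Φ, where roots are half-spaces: subsets of W of the form vα_s with α_s = {w ∈ W : ℓ(sw) > ℓ(w)}. Let {α, β} ⊆ Φ be a prenilpotent pair of distinct roots, i.e. α ∩ β ≠ ∅ and (−α) ∩ (−β) ≠ ∅, where −α denotes the complement W∖α. If the product r_α r_β of the associated reflections has infinite order, then α ⊊ β or β ⊊ α. -/
variable {B W : Type*} [Group W] {M : CoxeterMatrix B}

/-- The simple root (half-space) `α_s = {w ∈ W : ℓ(sw) > ℓ(w)}`. -/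
def simpleRoot (cs : CoxeterSystem M W) (i : B) : Set W :=
  {w | cs.length w < cs.length (cs.simple i * w)}

/-- A root (half-space) is a set of the form `v • α_s`. -/
def IsRoot (cs : CoxeterSystem M W) (α : Set W) : Prop :=
  ∃ (v : W) (i : B), α = (fun w => v * w) '' simpleRoot cs i

/-!
Left inversion sets `N(w) = {t | ℓ(t w) < ℓ(w)}` satisfy the cocycle rule
`N(uv) = N(u) ∆ u N(v) u⁻¹`, which comes from the signed conjugation representation of `W` on
`W × ZMod 2`. Hence every root is `{w | t ∈ N(w)}` or its complement, `t` being the unique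
reflection that swaps the root with its opposite.

Let `a = r_α`, `b = r_β` and let `z = ab` have infinite order. The reflections `t_k = z^k a` are
pairwise distinct and `b = t_{-1}`. Choose a nontrivial rotation `z^μ` (`μ > 0`) of minimal
length. Some `t_c` is shorter than `z^μ`, since otherwise every `t_{kμ}` would be an inversion of
`t_0`; then one of `t_{c ± μ}` is shorter as well, and comparing the least inversion among the
`t_k` of `z` with that of `z^μ` forces `μ = 1`. Two consecutive reflections shorter than every
rotation are canonical generators, and from them an induction on length shows that
`{k | t_k ∈ N(w)}` is the set of walls separating two chambers of a line. So the half-spaces of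
the adjacent walls `a` and `b` are nested or disjoint, and prenilpotency excludes all but the
nested cases.
-/

theorem ZMod.sum_range_two_mul_eq_zero {f : ℕ → ZMod 2} {m : ℕ} (hf : Function.Periodic f m) :
    ∑ j ∈ Finset.range (2 * m), f j = 0 := by
  have hf' (j : ℕ) : f (m + j) = f j := by rw [add_comm, hf j]
  simp only [two_mul, Finset.sum_range_add, hf', CharTwo.add_self_eq_zero]

namespace CoxeterSystem

variable (cs : CoxeterSystem M W)

local prefix:100 "s" => cs.simple
local prefix:100 "π" => cs.wordProd
local prefix:100 "ℓ" => cs.length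
local prefix:100 "ris" => cs.rightInvSeq

theorem simple_mul_mul_simple_eq_iff (i : B) (t x : W) : s i * t * s i = x ↔ t = s i * x * s i := by
  constructor <;> rintro rfl <;> simp [mul_assoc]

theorem simple_mul_mul_simple_eq_simple_iff (i : B) (t : W) : s i * t * s i = s i ↔ t = s i := by
  rw [simple_mul_mul_simple_eq_iff]
  simp

open scoped Classical in
noncomputable def simplePerm (i : B) : Equiv.Perm (W × ZMod 2) :=
  Function.Involutive.toPerm (fun p => (s i * p.1 * s i, p.2 + if p.1 = s i then 1 else 0)) <| by
    rintro ⟨t, ε⟩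
    simp only [simple_mul_mul_simple_eq_simple_iff, add_assoc, CharTwo.add_self_eq_zero, add_zero]
    simp [mul_assoc]

open scoped Classical in
theorem simplePerm_apply (i : B) (t : W) (ε : ZMod 2) :
    cs.simplePerm i (t, ε) = (s i * t * s i, ε + if t = s i then 1 else 0) := rfl

open scoped Classical in
theorem simplePerm_mul_pow_apply (i i' : B) (k : ℕ) (t : W) (ε : ZMod 2) :
    ((cs.simplePerm i * cs.simplePerm i') ^ k) (t, ε) =
      ((s i * s i') ^ k * t * ((s i * s i') ^ k)⁻¹,
        ε + ∑ j ∈ Finset.range (2 * k), if (s i' * s i) ^ j * s i' = t then 1 else 0) := by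
  have hshift (j : ℕ) : (s i' * s i) ^ (j + 2) * s i' =
      (s i' * s i) * ((s i' * s i) ^ j * s i') * (s i * s i') := by
    rw [pow_succ', pow_succ]
    simp only [mul_assoc]
  induction k generalizing t ε with
  | zero => simp
  | succ k ih =>
    rw [pow_succ, Equiv.Perm.mul_apply, Equiv.Perm.mul_apply, simplePerm_apply, simplePerm_apply,
      ih, mul_add, Finset.sum_range_succ', Finset.sum_range_succ']
    refine Prod.ext ?_ ?_
    · simp only [pow_succ, mul_inv_rev, inv_simple]
      group
    · have h₀ : t = s i' ↔ (s i' * s i) ^ 0 * s i' = t := by simp [eq_comm]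
      have h₁ : s i' * t * s i' = s i ↔ (s i' * s i) ^ (0 + 1) * s i' = t := by
        rw [simple_mul_mul_simple_eq_iff, eq_comm, zero_add, pow_one]
      have h₂ (x : W) :
          x = s i * (s i' * t * s i') * s i ↔ s i' * s i * x * (s i * s i') = t := by
        constructor <;> rintro rfl <;> simp [mul_assoc]
      simp only [hshift, h₀, h₁, h₂]
      ring

theorem isLiftable_simplePerm : M.IsLiftable cs.simplePerm := by
  intro i i'
  ext ⟨t, ε⟩ : 1
  rw [simplePerm_mul_pow_apply, ZMod.sum_range_two_mul_eq_zero fun j => ?_,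
    simple_mul_simple_pow]
  · simp
  · rw [add_comm, pow_add, simple_mul_simple_pow', one_mul]

/-- Signed conjugation, the representation behind the strong exchange condition
(Björner–Brenti, *Combinatorics of Coxeter groups*, Thm. 1.4.3). -/
noncomputable def signRep : W →* Equiv.Perm (W × ZMod 2) :=
  cs.lift ⟨cs.simplePerm, cs.isLiftable_simplePerm⟩

theorem signRep_simple (i : B) : cs.signRep (s i) = cs.simplePerm i :=
  cs.lift_apply_simple cs.isLiftable_simplePerm i

open scoped Classical in
theorem signRep_wordProd (ω : List B) (t : W) (ε : ZMod 2) :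
    cs.signRep (π ω) (t, ε) = (π ω * t * (π ω)⁻¹, ε + (ris ω).count t) := by
  induction ω generalizing ε with
  | nil => simp
  | cons i ω ih =>
    rw [wordProd_cons, map_mul, Equiv.Perm.mul_apply, ih, signRep_simple, simplePerm_apply]
    refine Prod.ext ?_ ?_
    · simp [mul_assoc]
    · have h : π ω * t * (π ω)⁻¹ = s i ↔ (π ω)⁻¹ * s i * π ω = t := by
        constructor <;> intro h <;> rw [← h] <;> group
      simp only [rightInvSeq, List.count_cons, h, beq_iff_eq]
      push_cast
      ring

/-- By `signRep_wordProd`, the parity of the number of occurrences of `t` in the right inversion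
sequence of any word for `w`. -/
noncomputable def rightInvParity (w t : W) : ZMod 2 := (cs.signRep w (t, 0)).2

theorem signRep_apply (w t : W) (ε : ZMod 2) :
    cs.signRep w (t, ε) = (w * t * w⁻¹, ε + cs.rightInvParity w t) := by
  obtain ⟨ω, rfl⟩ := cs.wordProd_surjective w
  simp [rightInvParity, signRep_wordProd]

open scoped Classical in
theorem rightInvParity_wordProd (ω : List B) (t : W) :
    cs.rightInvParity (π ω) t = (ris ω).count t := by
  simp [rightInvParity, signRep_wordProd]

theorem mem_rightInvSeq_of_rightInvParity_eq_one {ω : List B} {t : W}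
    (h : cs.rightInvParity (π ω) t = 1) : t ∈ ris ω := by
  classical
  rw [rightInvParity_wordProd] at h
  exact List.count_pos_iff.mp (Nat.pos_of_ne_zero fun h0 => by simp [h0] at h)

theorem rightInvParity_mul (u v t : W) :
    cs.rightInvParity (u * v) t = cs.rightInvParity v t + cs.rightInvParity u (v * t * v⁻¹) := by
  have h := congrArg Prod.snd (cs.signRep_apply (u * v) t 0)
  rw [map_mul, Equiv.Perm.mul_apply, signRep_apply, signRep_apply] at h
  simpa using h.symm

theorem rightInvParity_one (t : W) : cs.rightInvParity 1 t = 0 := by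
  simp [rightInvParity]

theorem rightInvParity_simple (i : B) : cs.rightInvParity (s i) (s i) = 1 := by
  simp [rightInvParity, signRep_simple, simplePerm_apply]

variable {cs} in
theorem IsReflection.rightInvParity_self {t : W} (ht : cs.IsReflection t) :
    cs.rightInvParity t t = 1 := by
  obtain ⟨v, i, rfl⟩ := ht
  have hconj : v⁻¹ * (v * s i * v⁻¹) * v⁻¹⁻¹ = s i := by group
  have hv := cs.rightInvParity_mul v v⁻¹ (v * s i * v⁻¹)
  rw [mul_inv_cancel, rightInvParity_one, hconj] at hv
  rw [rightInvParity_mul, rightInvParity_mul, hconj, inv_simple, simple_mul_simple_self, one_mul,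
    rightInvParity_simple]
  linear_combination -hv

theorem rightInvParity_eq_one_iff {t : W} (ht : cs.IsReflection t) (w : W) :
    cs.rightInvParity w t = 1 ↔ cs.IsRightInversion w t := by
  have hmp (w : W) (h : cs.rightInvParity w t = 1) : cs.IsRightInversion w t := by
    obtain ⟨ω, hω, rfl⟩ := cs.exists_isReduced w
    exact cs.isRightInversion_of_mem_rightInvSeq hω (cs.mem_rightInvSeq_of_rightInvParity_eq_one h)
  refine ⟨hmp w, fun hw => by_contra fun hne => ?_⟩
  have h := cs.rightInvParity_mul w t t
  rw [ht.rightInvParity_self, ht.inv, ht.mul_self, one_mul] at h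
  have hwt : cs.rightInvParity (w * t) t = 1 := by
    rw [h]
    generalize cs.rightInvParity w t = x at hne
    revert x
    decide
  have h' := (hmp _ hwt).2
  rw [mul_assoc, ht.mul_self, mul_one] at h'
  exact lt_asymm hw.2 h'

theorem isLeftInversion_iff_rightInvParity {t : W} (ht : cs.IsReflection t) (w : W) :
    cs.IsLeftInversion w t ↔ cs.rightInvParity w⁻¹ t = 1 := by
  rw [rightInvParity_eq_one_iff cs ht, isRightInversion_inv_iff]

/-- The strong exchange condition, as the cocycle rule `N(uv) = N(u) ∆ u N(v) u⁻¹` for left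
inversion sets. -/
theorem isLeftInversion_mul_iff {t : W} (ht : cs.IsReflection t) (u v : W) :
    cs.IsLeftInversion (u * v) t ↔
      Xor (cs.IsLeftInversion u t) (cs.IsLeftInversion v (u⁻¹ * t * u)) := by
  have ht' : cs.IsReflection (u⁻¹ * t * u) := by simpa using ht.conj u⁻¹
  rw [isLeftInversion_iff_rightInvParity cs ht, isLeftInversion_iff_rightInvParity cs ht,
    isLeftInversion_iff_rightInvParity cs ht', mul_inv_rev, rightInvParity_mul, inv_inv]
  generalize cs.rightInvParity u⁻¹ t = x
  generalize cs.rightInvParity v⁻¹ (u⁻¹ * t * u) = y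
  revert x y
  decide

theorem finite_setOf_isLeftInversion (w : W) : {t | cs.IsLeftInversion w t}.Finite := by
  obtain ⟨ω, hω⟩ := cs.wordProd_surjective w⁻¹
  refine (ris ω).finite_toSet.subset fun t ht => cs.mem_rightInvSeq_of_rightInvParity_eq_one ?_
  rw [hω, ← isLeftInversion_iff_rightInvParity cs ht.1]
  exact ht

variable {cs} in
theorem IsReflection.isLeftInversion_self {t : W} (ht : cs.IsReflection t) :
    cs.IsLeftInversion t t :=
  ⟨ht, by simpa [ht.mul_self] using ht.odd_length.pos⟩

theorem isLeftInversion_simple_iff (i : B) (t : W) : cs.IsLeftInversion (s i) t ↔ t = s i := by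
  refine ⟨fun ⟨_, h⟩ => ?_, fun h => h ▸ (cs.isReflection_simple i).isLeftInversion_self⟩
  rw [length_simple, Nat.lt_one_iff, length_eq_zero_iff] at h
  rw [← mul_one t, ← simple_mul_simple_self cs i, ← mul_assoc, h, one_mul]

/-- The half-space bounded by the wall of `t` on the side not containing `1`. -/
def halfSpace (t : W) : Set W := {w | cs.IsLeftInversion w t}

theorem simpleRoot_eq_compl_halfSpace (i : B) : simpleRoot cs i = (cs.halfSpace (s i))ᶜ := by
  ext w
  simp only [simpleRoot, halfSpace, Set.mem_ofPred_eq, Set.mem_compl_iff, IsLeftInversion,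
    cs.isReflection_simple i, true_and, not_lt]
  exact ⟨le_of_lt, fun h => h.lt_of_ne (cs.length_simple_mul_ne w i).symm⟩

theorem exists_isReflection_of_isRoot {α : Set W} (hα : IsRoot cs α) :
    ∃ t, cs.IsReflection t ∧ (α = cs.halfSpace t ∨ α = (cs.halfSpace t)ᶜ) := by
  obtain ⟨v, i, rfl⟩ := hα
  refine ⟨v * s i * v⁻¹, (cs.isReflection_simple i).conj v, ?_⟩
  have hmem (w : W) : w ∈ (v * ·) '' simpleRoot cs i ↔
      ¬Xor (cs.IsLeftInversion v⁻¹ (s i)) (w ∈ cs.halfSpace (v * s i * v⁻¹)) := by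
    rw [Set.image_mul_left, Set.mem_preimage, simpleRoot_eq_compl_halfSpace, Set.mem_compl_iff,
      halfSpace, Set.mem_ofPred_eq, isLeftInversion_mul_iff cs (cs.isReflection_simple i), inv_inv]
    rfl
  by_cases hv : cs.IsLeftInversion v⁻¹ (s i)
  · exact Or.inl (Set.ext fun w => by rw [hmem]; simp [Xor, hv])
  · exact Or.inr (Set.ext fun w => by rw [hmem]; simp [Xor, hv])

theorem eq_of_image_mul_left_eq_compl {r t : W} (hr : cs.IsReflection r) (ht : cs.IsReflection t)
    {α : Set W} (hα : α = cs.halfSpace t ∨ α = (cs.halfSpace t)ᶜ)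
    (hswap : (r * ·) '' α = αᶜ) : r = t := by
  have himage : (r * ·) '' cs.halfSpace t = (cs.halfSpace t)ᶜ := by
    rcases hα with rfl | rfl
    · exact hswap
    · rwa [Set.image_compl_eq (Group.mulLeft_bijective r), compl_inj_iff] at hswap
  obtain ⟨v, i, rfl⟩ := hr
  -- `r` swaps the adjacent elements `v` and `v * s i`, so the wall of `t` separates them.
  have h := Set.ext_iff.mp himage (v * s i)
  rw [Set.image_mul_left, Set.mem_preimage, show (v * s i * v⁻¹)⁻¹ * (v * s i) = v by group,
    Set.mem_compl_iff, halfSpace, Set.mem_ofPred_eq, Set.mem_ofPred_eq,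
    isLeftInversion_mul_iff cs ht, isLeftInversion_simple_iff] at h
  have hv : v⁻¹ * t * v = s i := by
    unfold Xor at h
    tauto
  rw [← hv]
  group

theorem exists_pos_forall_length_zpow_le (z : W) :
    ∃ μ : ℤ, 0 < μ ∧ ∀ m : ℤ, m ≠ 0 → ℓ (z ^ μ) ≤ ℓ (z ^ m) := by
  classical
  have h : ∃ n, ∃ m : ℤ, m ≠ 0 ∧ ℓ (z ^ m) = n := ⟨_, 1, one_ne_zero, rfl⟩
  obtain ⟨m, hm0, hm⟩ := Nat.find_spec h
  refine ⟨|m|, abs_pos.mpr hm0, fun m' hm' => ?_⟩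
  have habs : ℓ (z ^ |m|) = ℓ (z ^ m) := by
    rcases abs_choice m with h | h <;> simp [h, zpow_neg, length_inv]
  rw [habs, hm]
  exact Nat.find_min' h ⟨m', hm', rfl⟩

/-- If all of them are reflections, these are the reflections of the dihedral subgroup generated by
`t₀` and `z * t₀`. -/
def dihedralRefl (z t₀ : W) (k : ℤ) : W := z ^ k * t₀

/-- Wall `j` separates chamber `0` from chamber `m` in the line of chambers of an infinite dihedral
group, chamber `m` being the one between walls `m` and `m + 1`. -/
def Separates (m j : ℤ) : Prop := (1 ≤ j ∧ j ≤ m) ∨ (m < j ∧ j ≤ 0)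

/-- `t₀` and `z * t₀` are the canonical generators, in the sense of Dyer, of the reflection subgroup
they generate. -/
def IsCanonicalDihedral (z t₀ : W) : Prop :=
  ∀ j : ℤ, (cs.IsLeftInversion (dihedralRefl z t₀ 0) (dihedralRefl z t₀ j) ↔ j = 0) ∧
    (cs.IsLeftInversion (dihedralRefl z t₀ 1) (dihedralRefl z t₀ j) ↔ j = 1)

section Dihedral

variable {cs} {z t₀ : W}

local notation "τ" => dihedralRefl z t₀

theorem zpow_mul_dihedralRefl (m j : ℤ) : z ^ m * τ j = τ (m + j) := by
  simp [dihedralRefl, ← mul_assoc, zpow_add]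

theorem dihedralRefl_dihedralRefl (c j : ℤ) : dihedralRefl z (τ c) j = τ (j + c) := by
  simp [dihedralRefl, ← mul_assoc, zpow_add]

theorem dihedralRefl_injective (hz : ¬IsOfFinOrder z) : Function.Injective τ := fun _ _ h =>
  injective_zpow_iff_not_isOfFinOrder.mpr hz (mul_right_cancel h)

theorem dihedralRefl_mul_dihedralRefl (hD : ∀ k : ℤ, cs.IsReflection (τ k)) (a b : ℤ) :
    τ a * τ b = z ^ (a - b) := by
  have h := (hD b).mul_self
  simp only [dihedralRefl] at h ⊢
  calc z ^ a * t₀ * (z ^ b * t₀) = z ^ (a - b) * (z ^ b * t₀ * (z ^ b * t₀)) := by group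
    _ = z ^ (a - b) := by rw [h, mul_one]

theorem dihedralRefl_mul_zpow (hD : ∀ k : ℤ, cs.IsReflection (τ k)) (j m : ℤ) :
    τ j * z ^ m = τ (j - m) := by
  rw [← sub_sub_cancel j m, ← dihedralRefl_mul_dihedralRefl hD, ← mul_assoc, (hD j).mul_self,
    one_mul, sub_sub_cancel]

theorem inv_dihedralRefl_mul_mul (hD : ∀ k : ℤ, cs.IsReflection (τ k)) (k j : ℤ) :
    (τ k)⁻¹ * τ j * τ k = τ (2 * k - j) := by
  rw [(hD k).inv, dihedralRefl_mul_dihedralRefl hD, zpow_mul_dihedralRefl]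
  ring_nf

theorem inv_zpow_mul_dihedralRefl_mul (hD : ∀ k : ℤ, cs.IsReflection (τ k)) (m j : ℤ) :
    (z ^ m)⁻¹ * τ j * z ^ m = τ (j - 2 * m) := by
  rw [mul_assoc, dihedralRefl_mul_zpow hD, ← zpow_neg, zpow_mul_dihedralRefl]
  ring_nf

theorem isLeftInversion_dihedralRefl_mul_iff (hD : ∀ k : ℤ, cs.IsReflection (τ k)) (k : ℤ) (w : W)
    (j : ℤ) : cs.IsLeftInversion (τ k * w) (τ j) ↔
      Xor (cs.IsLeftInversion (τ k) (τ j)) (cs.IsLeftInversion w (τ (2 * k - j))) := by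
  rw [isLeftInversion_mul_iff cs (hD j), inv_dihedralRefl_mul_mul hD]

theorem isLeftInversion_zpow_mul_iff (hD : ∀ k : ℤ, cs.IsReflection (τ k)) (m : ℤ) (w : W)
    (j : ℤ) : cs.IsLeftInversion (z ^ m * w) (τ j) ↔
      Xor (cs.IsLeftInversion (z ^ m) (τ j)) (cs.IsLeftInversion w (τ (j - 2 * m))) := by
  rw [isLeftInversion_mul_iff cs (hD j), inv_zpow_mul_dihedralRefl_mul hD]

theorem isLeftInversion_zpow_iff (hD : ∀ k : ℤ, cs.IsReflection (τ k)) (m j : ℤ) :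
    cs.IsLeftInversion (z ^ m) (τ j) ↔ ℓ (τ (j - m)) < ℓ (z ^ m) := by
  rw [IsLeftInversion, dihedralRefl_mul_zpow hD, and_iff_right (hD j)]

theorem finite_setOf_isLeftInversion_dihedralRefl (hz : ¬IsOfFinOrder z) (w : W) :
    {j | cs.IsLeftInversion w (τ j)}.Finite :=
  (cs.finite_setOf_isLeftInversion w).preimage (dihedralRefl_injective hz).injOn

theorem isLeftInversion_dihedralRefl_iff (hD : ∀ k : ℤ, cs.IsReflection (τ k))
    (hc : cs.IsCanonicalDihedral z t₀) (k j : ℤ) :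
    cs.IsLeftInversion (τ k) (τ j) ↔ Separates (2 * k - 1) j := by
  induction k generalizing j with
  | zero =>
    rw [(hc j).1]
    unfold Separates
    omega
  | succ k ih =>
    have h : τ (k + 1) = τ 1 * (τ 0 * τ k) := by
      rw [dihedralRefl_mul_dihedralRefl hD, dihedralRefl_mul_zpow hD]
      ring_nf
    rw [h, isLeftInversion_dihedralRefl_mul_iff hD, isLeftInversion_dihedralRefl_mul_iff hD,
      (hc j).2, (hc _).1, ih]
    unfold Separates Xor
    omega
  | pred k ih =>
    have h : τ (-k - 1) = τ 0 * (τ 1 * τ (-k)) := by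
      rw [dihedralRefl_mul_dihedralRefl hD, dihedralRefl_mul_zpow hD]
      ring_nf
    rw [h, isLeftInversion_dihedralRefl_mul_iff hD, isLeftInversion_dihedralRefl_mul_iff hD,
      (hc j).1, (hc _).2, ih]
    unfold Separates Xor
    omega

theorem exists_forall_isLeftInversion_iff_separates (hD : ∀ k : ℤ, cs.IsReflection (τ k))
    (hc : cs.IsCanonicalDihedral z t₀) (w : W) :
    ∃ m, ∀ j, cs.IsLeftInversion w (τ j) ↔ Separates m j := by
  induction h : ℓ w using Nat.strong_induction_on generalizing w with
  | _ n ih =>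
    by_cases hw : ∃ k, cs.IsLeftInversion w (τ k)
    · obtain ⟨k, hk⟩ := hw
      obtain ⟨m, hm⟩ := ih _ (h ▸ hk.2) (τ k * w) rfl
      have hw : w = τ k * (τ k * w) := by rw [← mul_assoc, (hD k).mul_self, one_mul]
      -- The reflection in wall `k` maps chamber `m` to chamber `2 * k - 1 - m`.
      refine ⟨2 * k - 1 - m, fun j => ?_⟩
      rw [hw, isLeftInversion_dihedralRefl_mul_iff hD, isLeftInversion_dihedralRefl_iff hD hc, hm]
      unfold Separates Xor
      omega
    · simp only [not_exists] at hw
      exact ⟨0, fun j => by simp only [hw, false_iff, Separates]; omega⟩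

theorem halfSpace_nested_or_disjoint_of_isCanonicalDihedral (hD : ∀ k : ℤ, cs.IsReflection (τ k))
    (hc : cs.IsCanonicalDihedral z t₀) (p : ℤ) :
    cs.halfSpace (τ p) ⊆ cs.halfSpace (τ (p + 1)) ∨ cs.halfSpace (τ (p + 1)) ⊆ cs.halfSpace (τ p) ∨
      Disjoint (cs.halfSpace (τ p)) (cs.halfSpace (τ (p + 1))) := by
  have key (w : W) :
      (p < 0 → w ∈ cs.halfSpace (τ p) → w ∈ cs.halfSpace (τ (p + 1))) ∧
      (0 < p → w ∈ cs.halfSpace (τ (p + 1)) → w ∈ cs.halfSpace (τ p)) ∧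
      (p = 0 → w ∈ cs.halfSpace (τ p) → w ∉ cs.halfSpace (τ (p + 1))) := by
    obtain ⟨m, hm⟩ := exists_forall_isLeftInversion_iff_separates hD hc w
    simp only [halfSpace, Set.mem_ofPred_eq, hm, Separates]
    omega
  rcases lt_trichotomy p 0 with hp | hp | hp
  · exact Or.inl fun w => (key w).1 hp
  · exact Or.inr (Or.inr (Set.disjoint_left.mpr fun w => (key w).2.2 hp))
  · exact Or.inr (Or.inl fun w => (key w).2.1 hp)

theorem isLeftInversion_dihedralRefl_iff_eq (hD : ∀ k : ℤ, cs.IsReflection (τ k)) {μ : ℤ}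
    (hμ : ∀ m : ℤ, m ≠ 0 → ℓ (z ^ μ) ≤ ℓ (z ^ m)) {c : ℤ} (hc : ℓ (τ c) < ℓ (z ^ μ)) (j : ℤ) :
    cs.IsLeftInversion (τ c) (τ j) ↔ j = c := by
  refine ⟨fun h => by_contra fun hj => ?_, fun h => h ▸ (hD c).isLeftInversion_self⟩
  have := hμ (j - c) (sub_ne_zero.mpr hj)
  rw [← dihedralRefl_mul_dihedralRefl hD] at this
  exact absurd h.2 (by omega)

theorem exists_length_dihedralRefl_lt (hD : ∀ k : ℤ, cs.IsReflection (τ k)) (hz : ¬IsOfFinOrder z)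
    {μ : ℤ} (hμ : μ ≠ 0) : ∃ c, ℓ (τ c) < ℓ (z ^ μ) := by
  by_contra! h
  have hpow (k : ℕ) (j : ℤ) : ¬cs.IsLeftInversion (z ^ (μ * k)) (τ j) := by
    induction k generalizing j with
    | zero => simp [IsLeftInversion]
    | succ k ih =>
      rw [Nat.cast_succ, mul_add_one, add_comm, zpow_add, isLeftInversion_zpow_mul_iff hD,
        isLeftInversion_zpow_iff hD]
      rintro (⟨h', -⟩ | ⟨h', -⟩)
      · exact (h (j - μ)).not_gt h'
      · exact ih _ h'
  have hmem (k : ℕ) : μ * k ∈ {j | cs.IsLeftInversion (τ 0) (τ j)} := by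
    have h0 : τ 0 = τ (μ * k) * z ^ (μ * k) := by rw [dihedralRefl_mul_zpow hD, sub_self]
    rw [Set.mem_ofPred_eq, h0, isLeftInversion_dihedralRefl_mul_iff hD]
    exact Or.inl ⟨(hD _).isLeftInversion_self, hpow k _⟩
  refine Set.infinite_of_injective_forall_mem (fun a b hab => ?_) hmem
    (finite_setOf_isLeftInversion_dihedralRefl hz _)
  simpa [hμ] using hab

theorem length_dihedralRefl_add_lt_or_sub_lt (hD : ∀ k : ℤ, cs.IsReflection (τ k)) {μ : ℤ}
    (hμ : ∀ m : ℤ, m ≠ 0 → ℓ (z ^ μ) ≤ ℓ (z ^ m)) {c : ℤ} (hc : ℓ (τ c) < ℓ (z ^ μ)) :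
    ℓ (τ (c + μ)) < ℓ (z ^ μ) ∨ ℓ (τ (c - μ)) < ℓ (z ^ μ) := by
  have hμ0 : μ ≠ 0 := by
    rintro rfl
    simp at hc
  have h := (hD (c + 2 * μ)).isLeftInversion_self
  have e : τ (c + 2 * μ) = z ^ μ * (z ^ μ * τ c) := by
    rw [zpow_mul_dihedralRefl, zpow_mul_dihedralRefl]
    ring_nf
  nth_rw 1 [e] at h
  rw [isLeftInversion_zpow_mul_iff hD, isLeftInversion_zpow_mul_iff hD, isLeftInversion_zpow_iff hD,
    isLeftInversion_zpow_iff hD, isLeftInversion_dihedralRefl_iff_eq hD hμ hc,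
    show c + 2 * μ - μ = c + μ by ring, show c + 2 * μ - 2 * μ - μ = c - μ by ring] at h
  unfold Xor at h
  omega

theorem isLeftInversion_zpow_of_forall_lt (hD : ∀ k : ℤ, cs.IsReflection (τ k)) {m : ℤ}
    (hm : cs.IsLeftInversion z (τ m)) (hlt : ∀ i < m, ¬cs.IsLeftInversion z (τ i)) (k : ℤ)
    (hk : 1 ≤ k) :
    cs.IsLeftInversion (z ^ k) (τ m) ∧ ∀ i < m, ¬cs.IsLeftInversion (z ^ k) (τ i) := by
  induction k, hk using Int.leInduction with
  | base => simpa using ⟨hm, hlt⟩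
  | succ k _ ih =>
    rw [add_comm, zpow_add, zpow_one]
    have hz (j : ℤ) := isLeftInversion_zpow_mul_iff hD 1 (z ^ k) j
    simp only [zpow_one] at hz
    refine ⟨(hz m).mpr (Or.inl ⟨hm, ih.2 _ (by omega)⟩), fun i hi => ?_⟩
    rw [hz, Xor]
    have := hlt i hi
    have := ih.2 (i - 2 * 1) (by omega)
    tauto

theorem eq_one_of_length_dihedralRefl_lt (hD : ∀ k : ℤ, cs.IsReflection (τ k))
    (hz : ¬IsOfFinOrder z) {μ : ℤ} (hμ0 : 0 < μ) (hμ : ∀ m : ℤ, m ≠ 0 → ℓ (z ^ μ) ≤ ℓ (z ^ m))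
    {c : ℤ} (hc : ℓ (τ c) < ℓ (z ^ μ)) (hcμ : ℓ (τ (c + μ)) < ℓ (z ^ μ)) : μ = 1 := by
  have hN (j : ℤ) : cs.IsLeftInversion (z ^ μ) (τ j) ↔ j = c + μ ∨ j = c + 2 * μ := by
    have e : z ^ μ = τ (c + μ) * τ c := by
      rw [dihedralRefl_mul_dihedralRefl hD, add_sub_cancel_left]
    rw [e, isLeftInversion_dihedralRefl_mul_iff hD, isLeftInversion_dihedralRefl_iff_eq hD hμ hcμ,
      isLeftInversion_dihedralRefl_iff_eq hD hμ hc]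
    unfold Xor
    omega
  have h1 : cs.IsLeftInversion z (τ (c + 1)) := by
    have := (isLeftInversion_zpow_iff hD 1 (c + 1)).mpr
    rw [zpow_one, add_sub_cancel_right] at this
    exact this (hc.trans_le (by simpa using hμ 1 one_ne_zero))
  obtain ⟨m, hm, hmin⟩ := (finite_setOf_isLeftInversion_dihedralRefl hz z).exists_minimal ⟨_, h1⟩
  have hlt (i : ℤ) (hi : i < m) : ¬cs.IsLeftInversion z (τ i) := fun h => (hmin h hi.le).not_gt hi
  have hmc : m ≤ c + 1 := not_lt.mp fun h => hlt _ h h1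
  have := (hN m).mp (isLeftInversion_zpow_of_forall_lt hD hm hlt μ hμ0).1
  omega

theorem isCanonicalDihedral_of_length_lt (hD : ∀ k : ℤ, cs.IsReflection (τ k)) {μ : ℤ}
    (hμ : ∀ m : ℤ, m ≠ 0 → ℓ (z ^ μ) ≤ ℓ (z ^ m)) {c : ℤ} (hc : ℓ (τ c) < ℓ (z ^ μ))
    (hc₁ : ℓ (τ (c + 1)) < ℓ (z ^ μ)) : cs.IsCanonicalDihedral z (τ c) := by
  intro j
  simp only [dihedralRefl_dihedralRefl, zero_add, add_comm 1 c,
    isLeftInversion_dihedralRefl_iff_eq hD hμ hc, isLeftInversion_dihedralRefl_iff_eq hD hμ hc₁]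
  omega

theorem exists_isCanonicalDihedral (hD : ∀ k : ℤ, cs.IsReflection (τ k)) (hz : ¬IsOfFinOrder z) :
    ∃ c, cs.IsCanonicalDihedral z (τ c) := by
  obtain ⟨μ, hμ0, hμ⟩ := cs.exists_pos_forall_length_zpow_le z
  obtain ⟨c, hc⟩ := exists_length_dihedralRefl_lt hD hz hμ0.ne'
  rcases length_dihedralRefl_add_lt_or_sub_lt hD hμ hc with h | h
  · obtain rfl := eq_one_of_length_dihedralRefl_lt hD hz hμ0 hμ hc h
    exact ⟨c, isCanonicalDihedral_of_length_lt hD hμ hc h⟩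
  · rw [← sub_add_cancel c μ] at hc
    obtain rfl := eq_one_of_length_dihedralRefl_lt hD hz hμ0 hμ h hc
    exact ⟨c - 1, isCanonicalDihedral_of_length_lt hD hμ h hc⟩

theorem halfSpace_nested_or_disjoint (hD : ∀ k : ℤ, cs.IsReflection (τ k)) (hz : ¬IsOfFinOrder z)
    (p : ℤ) :
    cs.halfSpace (τ p) ⊆ cs.halfSpace (τ (p + 1)) ∨ cs.halfSpace (τ (p + 1)) ⊆ cs.halfSpace (τ p) ∨
      Disjoint (cs.halfSpace (τ p)) (cs.halfSpace (τ (p + 1))) := by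
  obtain ⟨c, hc⟩ := exists_isCanonicalDihedral hD hz
  have hD' (k : ℤ) : cs.IsReflection (dihedralRefl z (τ c) k) := by
    rw [dihedralRefl_dihedralRefl]
    exact hD _
  have := halfSpace_nested_or_disjoint_of_isCanonicalDihedral hD' hc (p - c)
  simpa only [dihedralRefl_dihedralRefl, sub_add_cancel, sub_add_eq_add_sub] using this

end Dihedral

variable {cs} in
theorem IsReflection.isReflection_mul_zpow_mul {a b : W} (ha : cs.IsReflection a)
    (hb : cs.IsReflection b) (k : ℤ) : cs.IsReflection ((a * b) ^ k * a) := by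
  have hsemi (n : ℤ) : a * (b * a) ^ n = (a * b) ^ n * a :=
    (SemiconjBy.zpow_right (mul_assoc a b a).symm n).eq
  have hinv (n : ℤ) : ((a * b) ^ n)⁻¹ = (b * a) ^ n := by
    rw [← inv_zpow, mul_inv_rev, ha.inv, hb.inv]
  obtain ⟨n, rfl | rfl⟩ := Int.even_or_odd' k
  · convert ha.conj ((a * b) ^ n) using 1
    rw [hinv, mul_assoc, hsemi, ← mul_assoc, ← zpow_add, two_mul]
  · convert (hb.conj a).conj ((a * b) ^ n) using 1
    rw [hinv, ha.inv, mul_assoc ((a * b) ^ n), mul_assoc a b a, mul_assoc a (b * a),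
      ← zpow_one_add (b * a) n, hsemi, ← mul_assoc, ← zpow_add,
      show n + (1 + n) = 2 * n + 1 by ring]

theorem halfSpace_nested_or_disjoint_of_not_isOfFinOrder {a b : W} (ha : cs.IsReflection a)
    (hb : cs.IsReflection b) (hab : ¬IsOfFinOrder (a * b)) :
    cs.halfSpace a ⊆ cs.halfSpace b ∨ cs.halfSpace b ⊆ cs.halfSpace a ∨
      Disjoint (cs.halfSpace a) (cs.halfSpace b) := by
  have h := halfSpace_nested_or_disjoint (ha.isReflection_mul_zpow_mul hb) hab (-1)
  have ha' : dihedralRefl (a * b) a (-1 + 1) = a := by simp [dihedralRefl]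
  have hb' : dihedralRefl (a * b) a (-1) = b := by
    simp [dihedralRefl, ha.inv, hb.inv, mul_assoc, ha.mul_self]
  rw [ha', hb'] at h
  rcases h with h | h | h
  exacts [Or.inr (Or.inl h), Or.inl h, Or.inr (Or.inr h.symm)]

end CoxeterSystem

theorem Set.subset_or_subset_of_nested_or_disjoint {X : Type*} {α β A B : Set X}
    (hα : α = A ∨ α = Aᶜ) (hβ : β = B ∨ β = Bᶜ) (hAB : A ⊆ B ∨ B ⊆ A ∨ Disjoint A B)
    (h₁ : (α ∩ β).Nonempty) (h₂ : (αᶜ ∩ βᶜ).Nonempty) : α ⊆ β ∨ β ⊆ α := by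
  by_contra! h
  obtain ⟨x, hxα, hxβ⟩ := Set.not_subset.mp h.1
  obtain ⟨y, hyβ, hyα⟩ := Set.not_subset.mp h.2
  obtain ⟨p, hpα, hpβ⟩ := h₁
  obtain ⟨q, hqα, hqβ⟩ := h₂
  rw [Set.disjoint_left] at hAB
  rcases hα with rfl | rfl <;> rcases hβ with rfl | rfl <;> rcases hAB with h | h | h <;>
    simp only [Set.mem_compl_iff] at * <;>
    have := @h x <;> have := @h y <;> have := @h p <;> have := @h q <;> tauto

/-- If `{α, β}` is a prenilpotent pair of distinct roots and the product
`r_α r_β` of the associated reflections has infinite order, then `α ⊊ β` or `β ⊊ α`. -/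
theorem prenilpotent_infinite_order_nested (cs : CoxeterSystem M W) {α β : Set W}
    (hα : IsRoot cs α) (hβ : IsRoot cs β) (hne : α ≠ β)
    (hpre₁ : (α ∩ β).Nonempty) (hpre₂ : (αᶜ ∩ βᶜ).Nonempty)
    {rα rβ : W} (hrα : cs.IsReflection rα) (hrβ : cs.IsReflection rβ)
    (hswapα : (fun w => rα * w) '' α = αᶜ) (hswapβ : (fun w => rβ * w) '' β = βᶜ)
    (hord : orderOf (rα * rβ) = 0) :
    α ⊂ β ∨ β ⊂ α := by
  obtain ⟨a, ha, hαa⟩ := cs.exists_isReflection_of_isRoot hα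
  obtain ⟨b, hb, hβb⟩ := cs.exists_isReflection_of_isRoot hβ
  obtain rfl := cs.eq_of_image_mul_left_eq_compl hrα ha hαa hswapα
  obtain rfl := cs.eq_of_image_mul_left_eq_compl hrβ hb hβb hswapβ
  have hab := cs.halfSpace_nested_or_disjoint_of_not_isOfFinOrder ha hb
    (orderOf_eq_zero_iff.mp hord)
  rcases Set.subset_or_subset_of_nested_or_disjoint hαa hβb hab hpre₁ hpre₂ with h | h
  · exact Or.inl (Set.ssubset_iff_subset_ne.mpr ⟨h, hne⟩)
  · exact Or.inr (Set.ssubset_iff_subset_ne.mpr ⟨h, hne.symm⟩)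
end

section
/- Let G be a group and U_1, …, U_k subgroups of G such that for all 1 ≤ i < j ≤ k one has [U_i, U_j] ≤ ⟨U_{i+1}, …, U_{j−1}⟩ (the trivial group when j = i+1). Then ⟨U_1, …, U_k⟩ equals the product set U_1 U_2 ⋯ U_k; if moreover each U_i is nilpotent, then this subgroup is nilpotent. -/
/-!
`U₁` normalises `M = ⟨U₂, …, U_k⟩`, since for `u ∈ U₁` and `v ∈ U_j` the commutator `⁅u, v⁆`
lies in `⟨U₂, …, U_{j-1}⟩ ≤ M`. Hence `⟨U₁, …, U_k⟩ = U₁ M` as sets, and induction on `k` gives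
the product decomposition. Symmetrically `U_k` normalises `A = ⟨U₁, …, U_{k-1}⟩`, so for `k ≥ 2`
both `A` and `M` are normal in `A ⊔ M = ⟨U₁, …, U_k⟩`; they are nilpotent by induction, and
Fitting's theorem makes their join nilpotent.
-/

open Subgroup

namespace Fin

variable {α : Type*} [CompleteLattice α] {n : ℕ}

theorem iSup_eq_sup_iSup_succ (f : Fin (n + 1) → α) :
    ⨆ i, f i = f 0 ⊔ ⨆ i : Fin n, f i.succ := by
  apply le_antisymm
  · simp only [iSup_le_iff, forall_fin_succ]
    exact ⟨le_sup_left, fun i => le_sup_of_le_right (le_iSup (fun i : Fin n => f i.succ) i)⟩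
  · exact sup_le (le_iSup f 0) (iSup_le fun i => le_iSup f i.succ)

theorem iSup_eq_iSup_castSucc_sup (f : Fin (n + 1) → α) :
    ⨆ i, f i = (⨆ i : Fin n, f i.castSucc) ⊔ f (last n) := by
  apply le_antisymm
  · simp only [iSup_le_iff, forall_fin_succ']
    exact ⟨fun i => le_sup_of_le_left (le_iSup (fun i : Fin n => f i.castSucc) i), le_sup_right⟩
  · exact sup_le (iSup_le fun i => le_iSup f i.castSucc) (le_iSup f _)

theorem iSup_castSucc_sup_iSup_succ (f : Fin (n + 2) → α) :
    (⨆ i : Fin (n + 1), f i.castSucc) ⊔ ⨆ i : Fin (n + 1), f i.succ = ⨆ i, f i := by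
  refine le_antisymm (sup_le (iSup_le fun i => le_iSup f _) (iSup_le fun i => le_iSup f _)) ?_
  rw [iSup_eq_sup_iSup_succ]
  exact sup_le_sup_right (le_iSup (fun i : Fin (n + 1) => f i.castSucc) 0) _

end Fin

namespace Subgroup

variable {G : Type*} [Group G]

theorem commutator_le_iff_le_comap_centralizer {H K M : Subgroup G} [M.Normal] :
    ⁅H, K⁆ ≤ M ↔ H ≤ (centralizer (K.map (QuotientGroup.mk' M))).comap (QuotientGroup.mk' M) := by
  rw [← map_le_iff_le_comap, ← commutator_eq_bot_iff_le_centralizer, ← map_commutator,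
    map_eq_bot_iff, QuotientGroup.ker_mk']

theorem commutator_iSup_left_le {ι : Sort*} {S : ι → Subgroup G} {K M : Subgroup G} [M.Normal]
    (h : ∀ i, ⁅S i, K⁆ ≤ M) : ⁅⨆ i, S i, K⁆ ≤ M := by
  simp_rw [commutator_le_iff_le_comap_centralizer] at h ⊢
  exact iSup_le h

theorem commutator_sup_right_le {H K₁ K₂ M : Subgroup G} [M.Normal]
    (h₁ : ⁅H, K₁⁆ ≤ M) (h₂ : ⁅H, K₂⁆ ≤ M) : ⁅H, K₁ ⊔ K₂⁆ ≤ M := by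
  rw [commutator_comm] at h₁ h₂ ⊢
  rw [commutator_le_iff_le_comap_centralizer] at h₁ h₂ ⊢
  exact sup_le h₁ h₂

theorem le_normalizer_iSup_of_commutator_le {ι : Sort*} {A : Subgroup G} {V : ι → Subgroup G}
    (h : ∀ i, ⁅A, V i⁆ ≤ ⨆ j, V j) : A ≤ normalizer (⨆ j, V j : Subgroup G) := by
  refine le_normalizer_iff.2 fun a ha m hm => ?_
  suffices ⨆ j, V j ≤ (⨆ j, V j).comap (MulAut.conj a).toMonoidHom from this hm
  refine iSup_le fun i v hv => ?_
  have := mul_mem (h i (commutator_mem_commutator ha hv)) (mem_iSup_of_mem i hv)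
  rwa [← conj_eq_commutatorElement_mul] at this

/-- Index `i` contains the commutators with at least `i` entries from `A`. -/
def shiftedLowerCentralSeries (A : Subgroup G) : ℕ → Subgroup G
  | 0 => ⊤
  | n + 1 => A.lowerCentralSeries n

variable {A B : Subgroup G}

instance shiftedLowerCentralSeries_normal [A.Normal] :
    ∀ n, (A.shiftedLowerCentralSeries n).Normal
  | 0 => inferInstanceAs (⊤ : Subgroup G).Normal
  | n + 1 => inferInstanceAs (A.lowerCentralSeries n).Normal

theorem commutator_shiftedLowerCentralSeries_le [A.Normal] :
    ∀ n, ⁅A.shiftedLowerCentralSeries n, A⁆ ≤ A.shiftedLowerCentralSeries (n + 1)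
  | 0 => commutator_le_right ⊤ A
  | _ + 1 => le_rfl

theorem shiftedLowerCentralSeries_eq_bot {c n : ℕ} (hc : A.lowerCentralSeries c = ⊥)
    (hn : c < n) : A.shiftedLowerCentralSeries n = ⊥ := by
  obtain ⟨m, rfl⟩ : ∃ m, n = m + 1 := ⟨n - 1, by omega⟩
  exact le_bot_iff.1 (hc ▸ A.lowerCentralSeries_antitone (by omega : c ≤ m))

def fittingBound (A B : Subgroup G) (n : ℕ) : Subgroup G :=
  ⨆ (i) (j) (_ : i + j = n + 1), A.shiftedLowerCentralSeries i ⊓ B.shiftedLowerCentralSeries j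

instance fittingBound_normal [A.Normal] [B.Normal] (n : ℕ) : (fittingBound A B n).Normal := by
  unfold fittingBound
  infer_instance

theorem le_fittingBound {n i j : ℕ} (h : i + j = n + 1) :
    A.shiftedLowerCentralSeries i ⊓ B.shiftedLowerCentralSeries j ≤ fittingBound A B n :=
  le_iSup₂_of_le i j (le_iSup_of_le h le_rfl)

theorem lowerCentralSeries_sup_le_fittingBound [A.Normal] [B.Normal] :
    ∀ n, (A ⊔ B).lowerCentralSeries n ≤ fittingBound A B n
  | 0 => sup_le ((le_inf le_rfl le_top).trans (le_fittingBound (i := 1) (j := 0) rfl))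
      ((le_inf le_top le_rfl).trans (le_fittingBound (i := 0) (j := 1) rfl))
  | n + 1 => by
    refine (commutator_mono (lowerCentralSeries_sup_le_fittingBound n) le_rfl).trans ?_
    refine commutator_iSup_left_le fun i => commutator_iSup_left_le fun j =>
      commutator_iSup_left_le fun hij => commutator_sup_right_le ?_ ?_
    · refine (le_inf ?_ ?_).trans (le_fittingBound (i := i + 1) (j := j) (by omega))
      · exact (commutator_mono inf_le_left le_rfl).trans
          (commutator_shiftedLowerCentralSeries_le _)
      · exact (commutator_mono inf_le_right le_rfl).trans (commutator_le_left _ _)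
    · refine (le_inf ?_ ?_).trans (le_fittingBound (i := i) (j := j + 1) (by omega))
      · exact (commutator_mono inf_le_left le_rfl).trans (commutator_le_left _ _)
      · exact (commutator_mono inf_le_right le_rfl).trans
          (commutator_shiftedLowerCentralSeries_le _)

theorem isNilpotent_sup [A.Normal] [B.Normal] (hA : Group.IsNilpotent A)
    (hB : Group.IsNilpotent B) : Group.IsNilpotent ↥(A ⊔ B) := by
  obtain ⟨c, hc⟩ := (isNilpotent_iff_lowerCentralSeries A).1 hA
  obtain ⟨d, hd⟩ := (isNilpotent_iff_lowerCentralSeries B).1 hB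
  refine (isNilpotent_iff_lowerCentralSeries _).2 ⟨c + d, le_bot_iff.1 ?_⟩
  refine (lowerCentralSeries_sup_le_fittingBound _).trans
    (iSup₂_le fun i j => iSup_le fun hij => ?_)
  rcases (by omega : c < i ∨ d < j) with h | h
  · exact inf_le_left.trans (shiftedLowerCentralSeries_eq_bot hc h).le
  · exact inf_le_right.trans (shiftedLowerCentralSeries_eq_bot hd h).le

theorem isNilpotent_sup_of_le_normalizer (hAN : A ⊔ B ≤ normalizer A)
    (hBN : A ⊔ B ≤ normalizer B) (hA : Group.IsNilpotent A) (hB : Group.IsNilpotent B) :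
    Group.IsNilpotent ↥(A ⊔ B) := by
  have := normal_subgroupOf_of_le_normalizer hAN
  have := normal_subgroupOf_of_le_normalizer hBN
  have hA₁ := (Group.isNilpotent_congr (subgroupOfEquivOfLe (le_sup_left : A ≤ A ⊔ B))).2 hA
  have hB₁ := (Group.isNilpotent_congr (subgroupOfEquivOfLe (le_sup_right : B ≤ A ⊔ B))).2 hB
  have := isNilpotent_sup hA₁ hB₁
  rwa [← subgroupOf_sup le_sup_left le_sup_right, subgroupOf_self, Group.isNilpotent_top] at this

end Subgroup

section

variable {G : Type*} [Group G]

def CommutatorCondition {k : ℕ} (U : Fin k → Subgroup G) : Prop :=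
  ∀ i j : Fin k, i < j → ⁅U i, U j⁆ ≤ ⨆ l ∈ Set.Ioo i j, U l

namespace CommutatorCondition

theorem comp {k m : ℕ} {U : Fin k → Subgroup G} (hU : CommutatorCondition U) {f : Fin m → Fin k}
    (hf : StrictMono f) (himage : ∀ i j, f '' Set.Ioo i j = Set.Ioo (f i) (f j)) :
    CommutatorCondition (U ∘ f) := fun i j hij => by
  simpa only [Function.comp_apply, ← himage, iSup_image] using hU (f i) (f j) (hf hij)

section

variable {k : ℕ} {U : Fin (k + 1) → Subgroup G}

theorem tail (hU : CommutatorCondition U) : CommutatorCondition fun i : Fin k => U i.succ :=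
  hU.comp Fin.strictMono_succ Fin.image_succ_Ioo

theorem init (hU : CommutatorCondition U) : CommutatorCondition fun i : Fin k => U i.castSucc :=
  hU.comp Fin.strictMono_castSucc Fin.image_castSucc_Ioo

theorem head_le_normalizer (hU : CommutatorCondition U) :
    U 0 ≤ normalizer (⨆ i : Fin k, U i.succ : Subgroup G) :=
  le_normalizer_iSup_of_commutator_le fun i => (hU 0 i.succ i.succ_pos).trans <| by
    rw [← Fin.image_succ_Iio, iSup_image]
    exact iSup₂_le_iSup _ _

theorem last_le_normalizer (hU : CommutatorCondition U) :
    U (Fin.last k) ≤ normalizer (⨆ i : Fin k, U i.castSucc : Subgroup G) :=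
  le_normalizer_iSup_of_commutator_le fun i => by
    rw [commutator_comm]
    refine (hU i.castSucc (Fin.last k) i.castSucc_lt_last).trans ?_
    rw [← Fin.image_castSucc_Ioi, iSup_image]
    exact iSup₂_le_iSup _ _

end

theorem mem_iSup_iff_exists_prod {k : ℕ} {U : Fin k → Subgroup G} (hU : CommutatorCondition U)
    {g : G} : g ∈ ⨆ i, U i ↔ ∃ u : Fin k → G, (∀ i, u i ∈ U i) ∧ g = (List.ofFn u).prod := by
  induction k generalizing g with
  | zero => simp [iSup_of_empty]
  | succ k ih =>
    rw [← SetLike.mem_coe, Fin.iSup_eq_sup_iSup_succ,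
      coe_mul_of_left_le_normalizer_right _ _ hU.head_le_normalizer, Set.mem_mul]
    simp only [SetLike.mem_coe, ih hU.tail, Fin.exists_fin_succ_pi, Fin.forall_fin_succ,
      Fin.cons_zero, Fin.cons_succ, List.ofFn_succ, List.prod_cons]
    constructor
    · rintro ⟨a, ha, _, ⟨v, hv, rfl⟩, rfl⟩
      exact ⟨a, v, ⟨ha, hv⟩, rfl⟩
    · rintro ⟨a, v, ⟨ha, hv⟩, rfl⟩
      exact ⟨a, ha, _, ⟨v, hv, rfl⟩, rfl⟩

theorem isNilpotent_iSup {k : ℕ} {U : Fin k → Subgroup G} (hU : CommutatorCondition U)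
    (hnil : ∀ i, Group.IsNilpotent (U i)) : Group.IsNilpotent ↥(⨆ i, U i) := by
  induction k with
  | zero => rw [iSup_of_empty]; infer_instance
  | succ k ih =>
    cases k with
    | zero => rw [Fin.iSup_eq_sup_iSup_succ, iSup_of_empty, sup_bot_eq]; exact hnil 0
    | succ k =>
      rw [← Fin.iSup_castSucc_sup_iSup_succ]
      refine isNilpotent_sup_of_le_normalizer ?_ ?_ (ih hU.init fun i => hnil _)
        (ih hU.tail fun i => hnil _)
      · rw [Fin.iSup_castSucc_sup_iSup_succ, Fin.iSup_eq_iSup_castSucc_sup]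
        exact sup_le le_normalizer hU.last_le_normalizer
      · rw [Fin.iSup_castSucc_sup_iSup_succ, Fin.iSup_eq_sup_iSup_succ]
        exact sup_le hU.head_le_normalizer le_normalizer

end CommutatorCondition

end

/-- If subgroups `U_1, …, U_k` of a group `G` satisfy
`[U_i, U_j] ≤ ⟨U_{i+1}, …, U_{j−1}⟩` for all `i < j`, then `⟨U_1, …, U_k⟩` equals the
product set `U_1 U_2 ⋯ U_k`; and if each `U_i` is nilpotent, this subgroup is nilpotent. -/
theorem subgroup_product_of_commutator_condition {G : Type*} [Group G] (k : ℕ)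
    (U : Fin k → Subgroup G)
    (hcomm : ∀ i j : Fin k, i < j → ⁅U i, U j⁆ ≤ ⨆ l ∈ Set.Ioo i j, U l) :
    (∀ g : G, g ∈ (⨆ i, U i) ↔
      ∃ u : Fin k → G, (∀ i, u i ∈ U i) ∧ g = (List.ofFn u).prod) ∧
    ((∀ i, Group.IsNilpotent (U i)) → Group.IsNilpotent (⨆ i, U i : Subgroup G)) :=
  ⟨fun _ => CommutatorCondition.mem_iSup_iff_exists_prod hcomm,
    CommutatorCondition.isNilpotent_iSup hcomm⟩
end
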